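/- arXiv:2309.07434 — 5 statements merged into one kernel-verified Lean document; each statement's English description precedes it below -/
import Mathlib

section
/- Let E be a unital completely positive map on the algebra of n×n complex matrices (i.e., a positive linear map given by X ↦ Σ_a E_a† X E_a with Σ_a E_a† E_a = I, satisfying E(I) = I). Then the set of fixed points {X : E(X) = X} is closed under adjoints and contains the identity; moreover if E is additionally trace-preserving, the fixed-point set is a C*-subalgebra (closed under multiplication). -/
open Matrix

lemma trace_ctm {n : ℕ} (A : Matrix (Fin n) (Fin n) ℂ) :
    (Aᴴ * A).trace = ((∑ j, ∑ i, Complex.normSq (A i j) : ℝ) : ℂ) := by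
  simp [Matrix.trace, Matrix.mul_apply, Matrix.diag, Matrix.conjTranspose_apply,
    Complex.normSq_eq_conj_mul_self]

lemma adjfix {n k : ℕ} (E : Fin k → Matrix (Fin n) (Fin n) ℂ)
    (ℰ : Matrix (Fin n) (Fin n) ℂ → Matrix (Fin n) (Fin n) ℂ)
    (hℰ : ∀ X, ℰ X = ∑ a, (E a)ᴴ * X * E a)
    (X : Matrix (Fin n) (Fin n) ℂ) (hX : ℰ X = X) : ℰ Xᴴ = Xᴴ := by
  have : (ℰ X)ᴴ = ℰ Xᴴ := by
    simp [hℰ, conjTranspose_sum, Matrix.conjTranspose_mul, Matrix.mul_assoc]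
  rw [← this, hX]

lemma key_id {n k : ℕ} (E : Fin k → Matrix (Fin n) (Fin n) ℂ)
    (hunital : ∑ a, (E a)ᴴ * E a = 1)
    (X : Matrix (Fin n) (Fin n) ℂ)
    (hX : ∑ a, (E a)ᴴ * X * E a = X)
    (hXH : ∑ a, (E a)ᴴ * Xᴴ * E a = Xᴴ) :
    ∑ a, (X * E a - E a * X)ᴴ * (X * E a - E a * X)
      = (∑ a, (E a)ᴴ * (Xᴴ * X) * E a) - Xᴴ * X := by
  have e1 : ∑ a, (E a)ᴴ * Xᴴ * E a * X = Xᴴ * X := by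
    rw [← Finset.sum_mul, hXH]
  have e2 : ∑ a, Xᴴ * ((E a)ᴴ * X * E a) = Xᴴ * X := by
    rw [← Finset.mul_sum, hX]
  have e3 : ∑ a, Xᴴ * ((E a)ᴴ * E a) * X = Xᴴ * X := by
    calc ∑ a, Xᴴ * ((E a)ᴴ * E a) * X = Xᴴ * (∑ a, (E a)ᴴ * E a) * X := by
          rw [Finset.mul_sum, Finset.sum_mul]
      _ = Xᴴ * X := by rw [hunital, mul_one]
  calc ∑ a, (X * E a - E a * X)ᴴ * (X * E a - E a * X)
      = ∑ a, ((E a)ᴴ * (Xᴴ * X) * E a - (E a)ᴴ * Xᴴ * E a * X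
            - Xᴴ * ((E a)ᴴ * X * E a) + Xᴴ * ((E a)ᴴ * E a) * X) := by
        apply Finset.sum_congr rfl; intro a _
        simp only [conjTranspose_sub, Matrix.conjTranspose_mul, sub_mul, mul_sub]
        noncomm_ring
    _ = _ := by
        simp only [Finset.sum_add_distrib, Finset.sum_sub_distrib, e1, e2, e3]
        abel

/-- If the channel is also trace-preserving, every fixed point commutes with
each Kraus operator. -/
lemma fix_comm {n k : ℕ} (E : Fin k → Matrix (Fin n) (Fin n) ℂ)
    (hunital : ∑ a, (E a)ᴴ * E a = 1)
    (htr : ∀ X : Matrix (Fin n) (Fin n) ℂ, (∑ a, (E a)ᴴ * X * E a).trace = X.trace)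
    (X : Matrix (Fin n) (Fin n) ℂ)
    (hX : ∑ a, (E a)ᴴ * X * E a = X)
    (hXH : ∑ a, (E a)ᴴ * Xᴴ * E a = Xᴴ) :
    ∀ a, X * E a = E a * X := by
  set D : Fin k → Matrix (Fin n) (Fin n) ℂ := fun a => X * E a - E a * X with hD
  have hkey := key_id E hunital X hX hXH
  have htr0 : ∑ a, ((D a)ᴴ * (D a)).trace = 0 := by
    rw [← Matrix.trace_sum, hkey, Matrix.trace_sub, htr (Xᴴ * X), sub_self]
  have hre : ∑ a, (∑ j, ∑ i, Complex.normSq (D a i j)) = 0 := by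
    have : ((∑ a, ∑ j, ∑ i, Complex.normSq (D a i j) : ℝ) : ℂ) = 0 := by
      rw [Complex.ofReal_sum, ← htr0]
      exact (Finset.sum_congr rfl fun a _ => (trace_ctm (D a)).symm)
    exact_mod_cast this
  intro a
  have hnn : ∀ b ∈ Finset.univ, (0:ℝ) ≤ ∑ j, ∑ i, Complex.normSq (D b i j) :=
    fun b _ => Finset.sum_nonneg fun j _ => Finset.sum_nonneg fun i _ =>
      Complex.normSq_nonneg _
  have hzero : ∑ j, ∑ i, Complex.normSq (D a i j) = 0 :=
    (Finset.sum_eq_zero_iff_of_nonneg hnn).mp hre a (Finset.mem_univ a)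
  have hDa : D a = 0 := by
    ext i j
    have h1 : ∀ j ∈ Finset.univ, (0:ℝ) ≤ ∑ i, Complex.normSq (D a i j) :=
      fun j _ => Finset.sum_nonneg fun i _ => Complex.normSq_nonneg _
    have h2 := (Finset.sum_eq_zero_iff_of_nonneg h1).mp hzero j (Finset.mem_univ j)
    have h3 := (Finset.sum_eq_zero_iff_of_nonneg
      (fun i _ => Complex.normSq_nonneg (D a i j))).mp h2 i (Finset.mem_univ i)
    simpa [Complex.normSq_eq_zero] using h3
  have := sub_eq_zero.mp hDa
  simpa using this

/-- for a unital completely positive map E(X) = Σ_a E_a† X E_a with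
Σ_a E_a† E_a = I (so E(I) = I), the fixed-point set is closed under adjoints and
contains the identity; if E is additionally trace-preserving, the fixed-point set
is closed under multiplication (hence a C*-subalgebra). -/
theorem stmt1 {n k : ℕ} (E : Fin k → Matrix (Fin n) (Fin n) ℂ)
    (hunital : ∑ a, (E a)ᴴ * E a = 1)
    (ℰ : Matrix (Fin n) (Fin n) ℂ → Matrix (Fin n) (Fin n) ℂ)
    (hℰ : ∀ X, ℰ X = ∑ a, (E a)ᴴ * X * E a) :
    (∀ X, ℰ X = X → ℰ Xᴴ = Xᴴ) ∧ (ℰ 1 = 1) ∧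
      ((∀ X : Matrix (Fin n) (Fin n) ℂ, (ℰ X).trace = X.trace) →
        ∀ X Y, ℰ X = X → ℰ Y = Y → ℰ (X * Y) = X * Y) := by
  refine ⟨adjfix E ℰ hℰ, ?_, ?_⟩
  · rw [hℰ]
    simpa using hunital
  · intro htr X Y hX hY
    have htr' : ∀ Z : Matrix (Fin n) (Fin n) ℂ,
        (∑ a, (E a)ᴴ * Z * E a).trace = Z.trace := by
      intro Z; rw [← hℰ]; exact htr Z
    have hXc := fix_comm E hunital htr' X (by rw [← hℰ]; exact hX)
      (by rw [← hℰ]; exact adjfix E ℰ hℰ X hX)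
    have hYc := fix_comm E hunital htr' Y (by rw [← hℰ]; exact hY)
      (by rw [← hℰ]; exact adjfix E ℰ hℰ Y hY)
    rw [hℰ]
    calc ∑ a, (E a)ᴴ * (X * Y) * E a = ∑ a, ((E a)ᴴ * X * E a) * Y := by
          apply Finset.sum_congr rfl; intro a _
          rw [Matrix.mul_assoc ((E a)ᴴ * X), ← hYc a, Matrix.mul_assoc, Matrix.mul_assoc,
            Matrix.mul_assoc]
      _ = X * Y := by rw [← Finset.sum_mul, ← hℰ, hX]
end

section
/- The correctable algebra of a channel is independent of the choice of Kraus representation: if {E_a} and {F_b} are two Kraus representations of the same CPTP map E on M_n(C), then {X : [E_a† E_b, X] = 0 ∀a,b} = {X : [F_a† F_b, X] = 0 ∀a,b}. -/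
/-!
For a linear functional `f` on matrices, `∑ a, |f (E a)|²` is a sesquilinear expression in the
entries of the channel evaluated at matrix units, so it does not depend on the Kraus
representation. Hence a functional vanishing on every `E a` vanishes on every `F b`: the `F b` lie
in the span of the `E a`, and vice versa. Consequently each `(F a)ᴴ * F b` is a linear combination
of the `(E c)ᴴ * E d`, and commutes with every matrix they all commute with.
-/

open Matrix Module Submodule ComplexConjugate

def krausMap {R m n ι : Type*} [Semiring R] [Star R] [Fintype n] [Fintype ι]
    (E : ι → Matrix m n R) (X : Matrix n n R) : Matrix m m R :=
  ∑ a, E a * X * (E a)ᴴ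

def correctableAlgebra {R m n ι : Type*} [Semiring R] [Star R] [Fintype m] [Fintype n]
    (E : ι → Matrix m n R) : Set (Matrix n n R) :=
  {X | ∀ a b, Commute ((E a)ᴴ * E b) X}

lemma conjTranspose_mul_mem_span_range {R m n ι : Type*} [CommSemiring R] [StarRing R]
    [Fintype m] [Fintype ι] {v : ι → Matrix m n R} {A B : Matrix m n R}
    (hA : A ∈ span R (Set.range v)) (hB : B ∈ span R (Set.range v)) :
    Aᴴ * B ∈ span R (Set.range fun p : ι × ι => (v p.1)ᴴ * v p.2) := by
  obtain ⟨c, rfl⟩ := (mem_span_range_iff_exists_fun R).1 hA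
  obtain ⟨d, rfl⟩ := (mem_span_range_iff_exists_fun R).1 hB
  rw [conjTranspose_sum, Matrix.sum_mul]
  refine sum_mem fun i _ => ?_
  rw [Matrix.mul_sum]
  refine sum_mem fun j _ => ?_
  rw [conjTranspose_smul, Matrix.smul_mul, Matrix.mul_smul, smul_smul]
  exact smul_mem _ _ (subset_span ⟨(i, j), rfl⟩)

lemma mul_single_mul_conjTranspose_apply {𝕜 m n : Type*} [RCLike 𝕜] [Fintype n] [DecidableEq n]
    (A : Matrix m n 𝕜) (i k : m) (j l : n) :
    (A * single j l (1 : 𝕜) * Aᴴ) i k = A i j * conj (A k l) := by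
  simp [Matrix.mul_apply, Matrix.single_apply, ite_and]

section Kraus

variable {𝕜 m n ι κ : Type*} [RCLike 𝕜] [Fintype m] [Fintype n] [DecidableEq m] [DecidableEq n]
  [Fintype ι] [Fintype κ]

omit [Fintype ι] [Fintype κ] in
lemma dual_apply_eq_sum_single (f : Dual 𝕜 (Matrix m n 𝕜)) (A : Matrix m n 𝕜) :
    f A = ∑ i, ∑ j, A i j * f (single i j 1) := by
  conv_lhs => rw [matrix_eq_sum_single A]
  simp only [map_sum]
  refine Finset.sum_congr rfl fun i _ => Finset.sum_congr rfl fun j _ => ?_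
  rw [← smul_eq_mul, ← map_smul, smul_single, smul_eq_mul, mul_one]

omit [Fintype κ] in
lemma sum_mul_conj_dual_apply_eq (E : ι → Matrix m n 𝕜) (f : Dual 𝕜 (Matrix m n 𝕜)) :
    ∑ a, f (E a) * conj (f (E a)) = ∑ i, ∑ j, ∑ k, ∑ l,
      f (single i j 1) * conj (f (single k l 1)) * krausMap E (single j l 1) i k := by
  simp only [dual_apply_eq_sum_single f (E _), krausMap, Matrix.sum_apply,
    mul_single_mul_conjTranspose_apply, map_sum, map_mul, Finset.sum_mul]
  simp only [Finset.mul_sum]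
  rw [Finset.sum_comm]; refine Finset.sum_congr rfl fun i _ => ?_
  rw [Finset.sum_comm]; refine Finset.sum_congr rfl fun j _ => ?_
  rw [Finset.sum_comm]; refine Finset.sum_congr rfl fun k _ => ?_
  rw [Finset.sum_comm]; refine Finset.sum_congr rfl fun l _ => ?_
  exact Finset.sum_congr rfl fun a _ => by ring

lemma mem_span_range_of_krausMap_eq {E : ι → Matrix m n 𝕜} {F : κ → Matrix m n 𝕜}
    (h : krausMap E = krausMap F) (b : κ) : F b ∈ span 𝕜 (Set.range E) := by
  rw [← Subspace.dualAnnihilator_dualCoannihilator_eq (W := span 𝕜 (Set.range E)),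
    mem_dualCoannihilator]
  intro f hf
  have hfE : ∀ a, f (E a) = 0 := fun a =>
    (mem_dualAnnihilator f).1 hf _ (subset_span ⟨a, rfl⟩)
  have hsum : ∑ b, f (F b) * conj (f (F b)) = 0 := by
    rw [sum_mul_conj_dual_apply_eq, ← h, ← sum_mul_conj_dual_apply_eq]
    simp [hfE]
  simp_rw [RCLike.mul_conj] at hsum
  norm_cast at hsum
  simpa using (Finset.sum_eq_zero_iff_of_nonneg fun b _ => sq_nonneg ‖f (F b)‖).1 hsum b
    (Finset.mem_univ b)

lemma correctableAlgebra_subset_of_krausMap_eq {E : ι → Matrix m n 𝕜} {F : κ → Matrix m n 𝕜}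
    (h : krausMap E = krausMap F) : correctableAlgebra E ⊆ correctableAlgebra F := by
  intro X hX a b
  have hmem := conjTranspose_mul_mem_span_range (mem_span_range_of_krausMap_eq h a)
    (mem_span_range_of_krausMap_eq h b)
  refine (Algebra.commute_of_mem_adjoin_of_forall_mem_commute
    (Algebra.span_le_adjoin 𝕜 _ hmem) ?_).symm
  rintro _ ⟨⟨a', b'⟩, rfl⟩
  exact (hX a' b').symm

lemma correctableAlgebra_eq_of_krausMap_eq {E : ι → Matrix m n 𝕜} {F : κ → Matrix m n 𝕜}
    (h : krausMap E = krausMap F) : correctableAlgebra E = correctableAlgebra F :=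
  (correctableAlgebra_subset_of_krausMap_eq h).antisymm
    (correctableAlgebra_subset_of_krausMap_eq h.symm)

end Kraus

theorem stmt3_general {n k m : ℕ} (E : Fin k → Matrix (Fin n) (Fin n) ℂ)
    (F : Fin m → Matrix (Fin n) (Fin n) ℂ)
    (hsame : ∀ X : Matrix (Fin n) (Fin n) ℂ,
      ∑ a, E a * X * (E a)ᴴ = ∑ b, F b * X * (F b)ᴴ) :
    {X : Matrix (Fin n) (Fin n) ℂ | ∀ a b, Commute ((E a)ᴴ * E b) X} =
      {X : Matrix (Fin n) (Fin n) ℂ | ∀ a b, Commute ((F a)ᴴ * F b) X} :=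
  correctableAlgebra_eq_of_krausMap_eq (funext hsame)

/-- the correctable algebra is independent of the Kraus representation:
if {E_a} and {F_b} define the same CPTP map, the commutation conditions
[E_a† E_b, X] = 0 and [F_a† F_b, X] = 0 define the same set. -/
theorem stmt3 {n k m : ℕ} (E : Fin k → Matrix (Fin n) (Fin n) ℂ)
    (F : Fin m → Matrix (Fin n) (Fin n) ℂ)
    (hE : ∑ a, (E a)ᴴ * E a = 1) (hF : ∑ b, (F b)ᴴ * F b = 1)
    (hsame : ∀ X : Matrix (Fin n) (Fin n) ℂ,
      ∑ a, E a * X * (E a)ᴴ = ∑ b, F b * X * (F b)ᴴ) :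
    {X : Matrix (Fin n) (Fin n) ℂ | ∀ a b, Commute ((E a)ᴴ * E b) X} =
      {X : Matrix (Fin n) (Fin n) ℂ | ∀ a b, Commute ((F a)ᴴ * F b) X} :=
  stmt3_general E F hsame
end

section
/- Let ρ_AB = Σ_{a,b} p(a,b) |a,b⟩⟨a,b| be a classical bipartite state with all marginals p(a) = Σ_b p(a,b) > 0 and p(b) = Σ_a p(a,b) > 0. Define an equivalence relation on the labels b by b ∼ b' iff p(a|b) = p(a|b') for all a, where p(a|b) = p(a,b)/p(b). Then there exist CPTP maps E : B(H_B) → B(H_B̃) and R : B(H_B̃) → B(H_B) with dim H_B̃ = m (the number of equivalence classes) such that (id ⊗ R)∘(id ⊗ E)(ρ_AB) = ρ_AB. -/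
/-!
A stochastic matrix `N` acts on density matrices as the channel `X ↦ diag (diag X ⬝ N)`. It is
completely positive because its extension by the identity sends `M` to
`∑ᵢ Mᵢᵢ ⊗ diag (N i ·)`, with `Mᵢᵢ` the diagonal blocks of `M`.

Take `E` to be the coarse graining `b ↦ [b]` and `R` its Bayesian inverse, which sends a class `c`
to `b ∈ c` with probability `p(b) / p(c)`. Then `R ∘ E` is the stochastic matrix
`K b b' = [b ∼ b'] p(b') / p([b'])`, and every row `p(a, ·)` is `K`-invariant since
`p(a, b) = p(a | b') p(b)` for `b ∼ b'`.
-/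

open Matrix
open scoped ComplexOrder

noncomputable def tensorId6 {γ ι κ : Type*}
    (L : Matrix ι ι ℂ → Matrix κ κ ℂ)
    (M : Matrix (γ × ι) (γ × ι) ℂ) : Matrix (γ × κ) (γ × κ) ℂ :=
  fun p q => L (fun i j => M (p.1, i) (q.1, j)) p.2 q.2

noncomputable def IsCPTP6 {ι κ : Type*} [Fintype ι] [Fintype κ]
    (L : Matrix ι ι ℂ →ₗ[ℂ] Matrix κ κ ℂ) : Prop :=
  (∀ X, (L X).trace = X.trace) ∧
  ∀ (d : ℕ) (M : Matrix (Fin d × ι) (Fin d × ι) ℂ), M.PosSemidef →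
    (tensorId6 (fun X => L X) M).PosSemidef

/-- The equivalence relation b ∼ b' iff the conditional distributions p(·|b), p(·|b')
coincide. -/
def condSetoid {dA dB : ℕ} (p : Fin dA × Fin dB → ℝ) : Setoid (Fin dB) :=
  ⟨fun b b' => ∀ a, p (a, b) / (∑ a', p (a', b)) = p (a, b') / (∑ a', p (a', b')),
    ⟨fun _ _ => rfl, fun h a => (h a).symm, fun h h' a => (h a).trans (h' a)⟩⟩

open scoped Kronecker

lemma tensorId6_apply {γ ι κ : Type*} (L : Matrix ι ι ℂ → Matrix κ κ ℂ)
    (M : Matrix (γ × ι) (γ × ι) ℂ) (g g' : γ) (k k' : κ) :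
    tensorId6 L M (g, k) (g', k') = L (M.submatrix (g, ·) (g', ·)) k k' :=
  rfl

section ClassicalChannel

variable {ι κ : Type*} [Fintype ι] [DecidableEq κ]

noncomputable def classicalChannel (N : Matrix ι κ ℝ) : Matrix ι ι ℂ →ₗ[ℂ] Matrix κ κ ℂ :=
  diagonalLinearMap κ ℂ ℂ ∘ₗ (N.map (↑)).vecMulLinear ∘ₗ diagLinearMap ι ℂ ℂ

lemma classicalChannel_apply (N : Matrix ι κ ℝ) (X : Matrix ι ι ℂ) :
    classicalChannel N X = diagonal (X.diag ᵥ* N.map (↑)) := rfl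

lemma trace_classicalChannel [Fintype κ] {N : Matrix ι κ ℝ} (hN : ∀ i, ∑ k, N i k = 1)
    (X : Matrix ι ι ℂ) :
    (classicalChannel N X).trace = X.trace := by
  simp only [classicalChannel_apply, trace_diagonal, vecMul, dotProduct, map_apply]
  rw [Finset.sum_comm]
  refine Finset.sum_congr rfl fun i _ => ?_
  rw [← Finset.mul_sum, ← Complex.ofReal_sum, hN i, Complex.ofReal_one, mul_one]

lemma tensorId6_classicalChannel {γ : Type*} (N : Matrix ι κ ℝ)
    (M : Matrix (γ × ι) (γ × ι) ℂ) :
    tensorId6 (classicalChannel N) M =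
      ∑ i, M.submatrix (·, i) (·, i) ⊗ₖ diagonal fun k => (N i k : ℂ) := by
  ext ⟨g, k⟩ ⟨g', k'⟩
  simp only [tensorId6_apply, classicalChannel_apply, Matrix.sum_apply, kroneckerMap_apply,
    submatrix_apply, diagonal_apply]
  split_ifs with h
  · simp [vecMul, dotProduct, mul_comm]
  · simp

lemma posSemidef_tensorId6_classicalChannel [Fintype κ] {γ : Type*} [Fintype γ]
    {N : Matrix ι κ ℝ} (hN : ∀ i k, 0 ≤ N i k) {M : Matrix (γ × ι) (γ × ι) ℂ} (hM : M.PosSemidef) :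
    (tensorId6 (classicalChannel N) M).PosSemidef := by
  rw [tensorId6_classicalChannel]
  exact posSemidef_sum _ fun i _ =>
    (hM.submatrix _).kronecker (PosSemidef.diagonal fun k => Complex.zero_le_real.mpr (hN i k))

lemma isCPTP6_classicalChannel [Fintype κ] {N : Matrix ι κ ℝ} (hN₀ : ∀ i k, 0 ≤ N i k)
    (hN₁ : ∀ i, ∑ k, N i k = 1) : IsCPTP6 (classicalChannel N) :=
  ⟨trace_classicalChannel hN₁, fun _ _ => posSemidef_tensorId6_classicalChannel hN₀⟩

end ClassicalChannel

section Composition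

variable {ι κ μ : Type*} [Fintype ι] [Fintype κ] [DecidableEq κ] [DecidableEq μ]

lemma classicalChannel_comp (N : Matrix ι κ ℝ) (N' : Matrix κ μ ℝ) :
    classicalChannel N' ∘ₗ classicalChannel N = classicalChannel (N * N') := by
  ext1 X
  simp only [LinearMap.comp_apply, classicalChannel_apply, diag_diagonal, vecMul_vecMul]
  exact congrArg (fun A => diagonal (X.diag ᵥ* A))
    (Matrix.map_mul (f := Complex.ofRealHom)).symm

lemma tensorId6_classicalChannel_comp {γ : Type*} (N : Matrix ι κ ℝ) (N' : Matrix κ μ ℝ)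
    (M : Matrix (γ × ι) (γ × ι) ℂ) :
    tensorId6 (classicalChannel N') (tensorId6 (classicalChannel N) M) =
      tensorId6 (classicalChannel (N * N')) M :=
  congrArg (fun L : Matrix ι ι ℂ →ₗ[ℂ] Matrix μ μ ℂ => tensorId6 L M)
    (classicalChannel_comp N N')

end Composition

lemma tensorId6_classicalChannel_diagonal {α ι : Type*} [Fintype ι] [DecidableEq α]
    [DecidableEq ι] {K : Matrix ι ι ℝ} {p : α × ι → ℝ}
    (hp : ∀ a, (fun i => p (a, i)) ᵥ* K = fun i => p (a, i)) :
    tensorId6 (classicalChannel K) (diagonal fun x => (p x : ℂ)) =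
      diagonal fun x => (p x : ℂ) := by
  ext ⟨a, i⟩ ⟨a', i'⟩
  rw [tensorId6_apply, classicalChannel_apply]
  by_cases ha : a = a'
  · subst ha
    rw [submatrix_diagonal _ _ (Prod.mk_right_injective a), diag_diagonal]
    simp only [diagonal_apply, Prod.mk.injEq, true_and]
    split_ifs
    · exact (RingHom.map_vecMul Complex.ofRealHom K _ i).symm.trans
        (congrArg _ (congrFun (hp a) i))
    · rfl
  · simp [diagonal_apply, ha, vecMul, dotProduct]

section SufficientStatistic

variable {β κ : Type*} [DecidableEq κ]

def fiberIndicator (f : β → κ) : Matrix β κ ℝ :=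
  of fun b c => if f b = c then 1 else 0

lemma fiberIndicator_nonneg (f : β → κ) (b : β) (c : κ) : 0 ≤ fiberIndicator f b c := by
  simp only [fiberIndicator, of_apply]
  split_ifs <;> norm_num

lemma sum_fiberIndicator [Fintype κ] (f : β → κ) (b : β) : ∑ c, fiberIndicator f b c = 1 := by
  simp [fiberIndicator]

variable [Fintype β]

def fiberSum (q : β → ℝ) (f : β → κ) (c : κ) : ℝ :=
  ∑ b with f b = c, q b

noncomputable def recoveryMatrix (q : β → ℝ) (f : β → κ) : Matrix κ β ℝ :=
  of fun c b => if f b = c then q b / fiberSum q f c else 0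

lemma fiberSum_pos {q : β → ℝ} (hq : ∀ b, 0 < q b) {f : β → κ} {c : κ}
    (hc : ∃ b, f b = c) :
    0 < fiberSum q f c := by
  obtain ⟨b, rfl⟩ := hc
  exact Finset.sum_pos (fun b _ => hq b) ⟨b, by simp⟩

lemma recoveryMatrix_nonneg {q : β → ℝ} (hq : ∀ b, 0 ≤ q b) (f : β → κ) (c : κ) (b : β) :
    0 ≤ recoveryMatrix q f c b := by
  simp only [recoveryMatrix, of_apply]
  split_ifs
  · exact div_nonneg (hq b) (Finset.sum_nonneg fun b _ => hq b)
  · exact le_rfl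

lemma sum_recoveryMatrix {q : β → ℝ} (hq : ∀ b, 0 < q b) {f : β → κ} (hf : f.Surjective)
    (c : κ) : ∑ b, recoveryMatrix q f c b = 1 := by
  simp only [recoveryMatrix, of_apply]
  rw [← Finset.sum_filter, ← Finset.sum_div]
  exact div_self (fiberSum_pos hq (hf c)).ne'

lemma vecMul_fiberIndicator [Fintype κ] (v : β → ℝ) (f : β → κ) (c : κ) :
    (v ᵥ* fiberIndicator f) c = ∑ b with f b = c, v b := by
  simp [vecMul, dotProduct, fiberIndicator, Finset.sum_filter]

lemma vecMul_recoveryMatrix [Fintype κ] (w : κ → ℝ) (q : β → ℝ) (f : β → κ) (b : β) :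
    (w ᵥ* recoveryMatrix q f) b = w (f b) * (q b / fiberSum q f (f b)) := by
  simp [vecMul, dotProduct, recoveryMatrix]

lemma vecMul_fiberIndicator_mul_recoveryMatrix [Fintype κ] {q : β → ℝ} (hq : ∀ b, 0 < q b)
    {f : β → κ} {v : β → ℝ} (hv : ∀ b b', f b = f b' → v b / q b = v b' / q b') :
    v ᵥ* (fiberIndicator f * recoveryMatrix q f) = v := by
  ext b
  have hfiber : ∑ b' with f b' = f b, v b' = v b / q b * fiberSum q f (f b) := by
    rw [fiberSum, Finset.mul_sum]
    refine Finset.sum_congr rfl fun b' hb' => ?_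
    rw [← hv b' b (Finset.mem_filter.mp hb').2, div_mul_cancel₀ _ (hq b').ne']
  have := (hq b).ne'
  have := (fiberSum_pos hq (f := f) ⟨b, rfl⟩).ne'
  rw [← vecMul_vecMul, vecMul_recoveryMatrix, vecMul_fiberIndicator, hfiber]
  field_simp

end SufficientStatistic

open Classical in
theorem stmt6_general {dA dB : ℕ} (p : Fin dA × Fin dB → ℝ)
    (hpb : ∀ b : Fin dB, 0 < ∑ a, p (a, b))
    (ρAB : Matrix (Fin dA × Fin dB) (Fin dA × Fin dB) ℂ)
    (hρAB : ρAB = Matrix.diagonal (fun x => (p x : ℂ)))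
    (m : ℕ) (hm : m = Fintype.card (Quotient (condSetoid p))) :
    ∃ (E : Matrix (Fin dB) (Fin dB) ℂ →ₗ[ℂ] Matrix (Fin m) (Fin m) ℂ)
      (R : Matrix (Fin m) (Fin m) ℂ →ₗ[ℂ] Matrix (Fin dB) (Fin dB) ℂ),
      IsCPTP6 E ∧ IsCPTP6 R ∧
        tensorId6 (fun X => R X) (tensorId6 (fun X => E X) ρAB) = ρAB := by
  subst hρAB hm
  set q : Fin dB → ℝ := fun b => ∑ a, p (a, b)
  set f := Fintype.equivFin (Quotient (condSetoid p)) ∘ Quotient.mk (condSetoid p)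
  have hf : f.Surjective := (Fintype.equivFin _).surjective.comp Quotient.mk_surjective
  refine ⟨classicalChannel (fiberIndicator f), classicalChannel (recoveryMatrix q f),
    isCPTP6_classicalChannel (fiberIndicator_nonneg f) (sum_fiberIndicator f),
    isCPTP6_classicalChannel (recoveryMatrix_nonneg (fun b => (hpb b).le) f)
      (sum_recoveryMatrix hpb hf), ?_⟩
  rw [tensorId6_classicalChannel_comp]
  exact tensorId6_classicalChannel_diagonal fun a =>
    vecMul_fiberIndicator_mul_recoveryMatrix hpb fun b b' hbb' =>
      Quotient.exact ((Fintype.equivFin _).injective hbb') a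

open Classical in
/-- a classical bipartite state can be exactly locally compressed on B
to dimension m = number of equivalence classes of conditional distributions
(minimal sufficient statistic). -/
theorem stmt6 {dA dB : ℕ} (p : Fin dA × Fin dB → ℝ)
    (hp : ∀ x, 0 ≤ p x) (hsum : ∑ x, p x = 1)
    (hpa : ∀ a : Fin dA, 0 < ∑ b, p (a, b))
    (hpb : ∀ b : Fin dB, 0 < ∑ a, p (a, b))
    (ρAB : Matrix (Fin dA × Fin dB) (Fin dA × Fin dB) ℂ)
    (hρAB : ρAB = Matrix.diagonal (fun x => (p x : ℂ)))
    (m : ℕ) (hm : m = Fintype.card (Quotient (condSetoid p))) :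
    ∃ (E : Matrix (Fin dB) (Fin dB) ℂ →ₗ[ℂ] Matrix (Fin m) (Fin m) ℂ)
      (R : Matrix (Fin m) (Fin m) ℂ →ₗ[ℂ] Matrix (Fin dB) (Fin dB) ℂ),
      IsCPTP6 E ∧ IsCPTP6 R ∧
        tensorId6 (fun X => R X) (tensorId6 (fun X => E X) ρAB) = ρAB :=
  stmt6_general p hpb ρAB hρAB m hm
end

section
/- Let E(X) = Σ_a E_a X E_a† be a CPTP map on M_n(C) and define its complementary map E^c(X) := Σ_{a,b} tr(E_a X E_b†) |a⟩⟨b| on C^k (k = number of Kraus operators). Then the correctable algebra of E^c equals the commutant of the image of E†: A_{E^c} = (Im E†)', where E†(Y) = Σ_a E_a† Y E_a. -/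
open Matrix

lemma keyA {n k : ℕ} (E : Fin k → Matrix (Fin n) (Fin n) ℂ)
    (F : Fin n → Matrix (Fin k) (Fin n) ℂ)
    (hF : ∀ c a j, F c a j = E a c j) (c d : Fin n) :
    (F c)ᴴ * F d = ∑ a, (E a)ᴴ * Matrix.single c d 1 * E a := by
  ext j j'
  simp [Matrix.mul_apply, Matrix.sum_apply, hF, Matrix.single, Finset.mul_sum,
    Finset.sum_mul, mul_comm, mul_assoc, mul_left_comm, ite_and, Finset.sum_ite_eq]

lemma keyB {n k : ℕ} (E : Fin k → Matrix (Fin n) (Fin n) ℂ)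
    (F : Fin n → Matrix (Fin k) (Fin n) ℂ)
    (hF : ∀ c a j, F c a j = E a c j) (Y : Matrix (Fin n) (Fin n) ℂ) :
    ∑ a, (E a)ᴴ * Y * E a = ∑ c, ∑ d, Y c d • ((F c)ᴴ * F d) := by
  ext j j'
  simp only [Matrix.sum_apply, Matrix.mul_apply, Matrix.smul_apply, smul_eq_mul,
    conjTranspose_apply, hF, Finset.mul_sum, Finset.sum_mul]
  conv_rhs => enter [2, c]; rw [Finset.sum_comm]
  conv_rhs => rw [Finset.sum_comm]
  conv_lhs => enter [2, a]; rw [Finset.sum_comm]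
  refine Finset.sum_congr rfl fun a _ => Finset.sum_congr rfl fun c _ =>
    Finset.sum_congr rfl fun d _ => by ring

/-- Bény–Kempf–Kribs: for a CPTP map E(X) = Σ_a E_a X E_a† on M_n(ℂ),
the correctable algebra of its complementary channel E^c equals the commutant of the
image of the dual map E†.  The complementary channel E^c(X) = Σ_{a,b} tr(E_a X E_b†)|a⟩⟨b|
has Kraus operators F_c (c = 1,…,n) given by (F_c)_{a,j} = (E_a)_{c,j}, so its
correctable algebra is {X : [F_c† F_d, X] = 0 ∀ c,d}. -/
theorem stmt8 {n k : ℕ} (E : Fin k → Matrix (Fin n) (Fin n) ℂ)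
    (htp : ∑ a, (E a)ᴴ * E a = 1)
    (F : Fin n → Matrix (Fin k) (Fin n) ℂ)
    (hF : ∀ c a j, F c a j = E a c j) :
    {X : Matrix (Fin n) (Fin n) ℂ | ∀ c d, Commute ((F c)ᴴ * F d) X} =
      {X : Matrix (Fin n) (Fin n) ℂ |
        ∀ Y : Matrix (Fin n) (Fin n) ℂ, Commute (∑ a, (E a)ᴴ * Y * E a) X} := by
  ext X
  simp only [Set.mem_setOf_eq]
  constructor
  · intro h Y
    rw [keyB E F hF]
    exact Finset.sum_induction _ (fun Z => Commute Z X) (fun _ _ => Commute.add_left)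
      (Commute.zero_left X) (fun c _ => Finset.sum_induction _ (fun Z => Commute Z X)
        (fun _ _ => Commute.add_left) (Commute.zero_left X)
        (fun d _ => (h c d).smul_left _))
  · intro h c d
    rw [keyA E F hF]
    exact h _
end

section
/- Let P and Q be orthogonal projections on a finite-dimensional Hilbert space. Then 2Q(Q+P)^{+}P is the orthogonal projection onto range(P) ∩ range(Q), where (Q+P)^{+} denotes the Moore–Penrose pseudoinverse. -/
/-!
For positive semidefinite `P`, `Q` the kernel of `A = Q + P` lies in that of `P`, so every
generalized inverse `B` of `A` (`A * B * A = A`) satisfies `P * B * A = P = A * B * P`.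
Substituting `Q = A - P` gives `Q * B * P = P - P * B * P = P * B * Q`. For projections, on
`range P ∩ range Q` this makes `2 • (Q * B * P)` act as `(Q * B * P + P * B * P) = A * B * P`,
i.e. as the identity, while `2 • (Q * B * P) = 2 • (P * B * Q)` maps into both ranges.
The pseudoinverse of `A` is such a `B`, and it is Hermitian, which makes the product Hermitian.
-/

open Matrix

/-- Moore–Penrose pseudoinverse of a Hermitian matrix, via the spectral decomposition. -/
noncomputable def herPinv {n : ℕ} {A : Matrix (Fin n) (Fin n) ℂ} (hA : A.IsHermitian) :
    Matrix (Fin n) (Fin n) ℂ :=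
  (hA.eigenvectorUnitary : Matrix (Fin n) (Fin n) ℂ) *
    Matrix.diagonal (fun i => if hA.eigenvalues i = 0 then (0 : ℂ) else ((hA.eigenvalues i)⁻¹ : ℂ)) *
      (hA.eigenvectorUnitary : Matrix (Fin n) (Fin n) ℂ)ᴴ

section Pseudoinverse

open Unitary

variable {n : ℕ} {A : Matrix (Fin n) (Fin n) ℂ} (hA : A.IsHermitian)

-- The case split in `herPinv` is redundant, since `(0 : ℂ)⁻¹ = 0`.
lemma herPinv_eq_conjStarAlgAut : herPinv hA = conjStarAlgAut ℂ _ hA.eigenvectorUnitary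
    (diagonal fun i => (hA.eigenvalues i : ℂ)⁻¹) := by
  rw [conjStarAlgAut_apply, herPinv, star_eq_conjTranspose]
  congr 3 with i
  split_ifs with h <;> simp [h]

lemma conjTranspose_herPinv : (herPinv hA)ᴴ = herPinv hA := by
  rw [herPinv_eq_conjStarAlgAut, ← star_eq_conjTranspose, ← map_star, star_eq_conjTranspose,
    diagonal_conjTranspose]
  congr 3 with i
  simp [← Complex.ofReal_inv]

lemma mul_herPinv_mul_self : A * herPinv hA * A = A := by
  rw [herPinv_eq_conjStarAlgAut]
  -- freeze the spectral data, so that `rw` can replace `A` without touching `hA`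
  set U := hA.eigenvectorUnitary
  set d := hA.eigenvalues
  rw [hA.spectral_theorem, ← map_mul, ← map_mul, diagonal_mul_diagonal, diagonal_mul_diagonal]
  congr 3 with i
  exact mul_inv_mul_cancel _

end Pseudoinverse

namespace Matrix

open scoped ComplexOrder MatrixOrder

variable {m 𝕜 : Type*} [Fintype m] [RCLike 𝕜]

theorem PosSemidef.mulVec_eq_zero_of_add_mulVec_eq_zero {A B : Matrix m m 𝕜}
    (hA : A.PosSemidef) (hB : B.PosSemidef) {x : m → 𝕜} (h : (A + B) *ᵥ x = 0) :
    A *ᵥ x = 0 ∧ B *ᵥ x = 0 := by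
  have hsum : star x ⬝ᵥ A *ᵥ x + star x ⬝ᵥ B *ᵥ x = 0 := by
    rw [← dotProduct_add, ← add_mulVec, h, dotProduct_zero]
  obtain ⟨hAx, hBx⟩ := (add_eq_zero_iff_of_nonneg (hA.dotProduct_mulVec_nonneg x)
    (hB.dotProduct_mulVec_nonneg x)).1 hsum
  exact ⟨(hA.dotProduct_mulVec_zero_iff x).1 hAx, (hB.dotProduct_mulVec_zero_iff x).1 hBx⟩

theorem _root_.IsStarProjection.posSemidef {P : Matrix m m 𝕜} (hP : IsStarProjection P) :
    P.PosSemidef :=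
  hP.nonneg.posSemidef

theorem mulVec_eq_self_of_mem_range {P : Matrix m m 𝕜} (hP : IsIdempotentElem P) {v : m → 𝕜}
    (hv : v ∈ LinearMap.range P.mulVecLin) : P *ᵥ v = v := by
  obtain ⟨w, rfl⟩ := hv
  rw [mulVecLin_apply, mulVec_mulVec, hP.eq]

variable [DecidableEq m]

theorem PosSemidef.mul_eq_zero_of_add_mul_eq_zero {A B : Matrix m m 𝕜}
    (hA : A.PosSemidef) (hB : B.PosSemidef) {M : Matrix m m 𝕜} (h : (A + B) * M = 0) :
    A * M = 0 ∧ B * M = 0 := by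
  have hcol (i : m) := hA.mulVec_eq_zero_of_add_mulVec_eq_zero hB (x := M *ᵥ Pi.single i 1)
    (by rw [mulVec_mulVec, h, zero_mulVec])
  constructor <;> refine ext_of_mulVec_single fun i => ?_ <;>
    simp only [← mulVec_mulVec, (hcol i).1, (hcol i).2, zero_mulVec]

variable {P Q B : Matrix m m 𝕜}

theorem PosSemidef.mul_mul_add_eq_right (hQ : Q.PosSemidef) (hP : P.PosSemidef)
    (hB : (Q + P) * B * (Q + P) = Q + P) : P * B * (Q + P) = P := by
  have hker : (Q + P) * (1 - B * (Q + P)) = 0 := by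
    rw [mul_sub, mul_one, ← Matrix.mul_assoc, hB, sub_self]
  have := (hQ.mul_eq_zero_of_add_mul_eq_zero hP hker).2
  rwa [mul_sub, mul_one, sub_eq_zero, eq_comm, ← Matrix.mul_assoc] at this

theorem PosSemidef.add_mul_mul_eq_right (hQ : Q.PosSemidef) (hP : P.PosSemidef)
    (hB : (Q + P) * B * (Q + P) = Q + P) : (Q + P) * B * P = P := by
  have hA : (Q + P)ᴴ = Q + P := (hQ.isHermitian.add hP.isHermitian).eq
  have hB' : (Q + P) * Bᴴ * (Q + P) = Q + P := by
    simpa only [conjTranspose_mul, hA, Matrix.mul_assoc] using congrArg Matrix.conjTranspose hB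
  simpa only [conjTranspose_mul, hA, hP.isHermitian.eq, conjTranspose_conjTranspose,
    Matrix.mul_assoc] using congrArg Matrix.conjTranspose (hQ.mul_mul_add_eq_right hP hB')

theorem PosSemidef.mul_mul_comm_of_add (hQ : Q.PosSemidef) (hP : P.PosSemidef)
    (hB : (Q + P) * B * (Q + P) = Q + P) : Q * B * P = P * B * Q :=
  calc Q * B * P = (Q + P) * B * P - P * B * P := by
        rw [← Matrix.sub_mul, ← Matrix.sub_mul, add_sub_cancel_right]
    _ = P * B * (Q + P) - P * B * P := by
        rw [hQ.add_mul_mul_eq_right hP hB, hQ.mul_mul_add_eq_right hP hB]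
    _ = P * B * Q := by rw [Matrix.mul_add, add_sub_cancel_right]

theorem PosSemidef.conjTranspose_mul_mul_of_add (hQ : Q.PosSemidef) (hP : P.PosSemidef)
    (hB : (Q + P) * B * (Q + P) = Q + P) (hBh : Bᴴ = B) : (Q * B * P)ᴴ = Q * B * P := by
  rw [conjTranspose_mul, conjTranspose_mul, hBh, hP.isHermitian.eq, hQ.isHermitian.eq,
    ← Matrix.mul_assoc, hQ.mul_mul_comm_of_add hP hB]

theorem IsStarProjection.smul_mul_mul_mulVec_mem_range_inf (hQ : IsStarProjection Q)
    (hP : IsStarProjection P) (hB : (Q + P) * B * (Q + P) = Q + P) (v : m → 𝕜) :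
    ((2 : 𝕜) • (Q * B * P)) *ᵥ v ∈ LinearMap.range P.mulVecLin ⊓ LinearMap.range Q.mulVecLin := by
  refine ⟨⟨((2 : 𝕜) • (B * Q)) *ᵥ v, ?_⟩, ⟨((2 : 𝕜) • (B * P)) *ᵥ v, ?_⟩⟩
  · rw [mulVecLin_apply, mulVec_mulVec, mul_smul_comm, ← Matrix.mul_assoc,
      hQ.posSemidef.mul_mul_comm_of_add hP.posSemidef hB]
  · rw [mulVecLin_apply, mulVec_mulVec, mul_smul_comm, ← Matrix.mul_assoc]

theorem IsStarProjection.smul_mul_mul_mulVec_eq_self (hQ : IsStarProjection Q)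
    (hP : IsStarProjection P) (hB : (Q + P) * B * (Q + P) = Q + P) {v : m → 𝕜}
    (hv : v ∈ LinearMap.range P.mulVecLin ⊓ LinearMap.range Q.mulVecLin) :
    ((2 : 𝕜) • (Q * B * P)) *ᵥ v = v := by
  have hPv := mulVec_eq_self_of_mem_range hP.isIdempotentElem hv.1
  have hQv := mulVec_eq_self_of_mem_range hQ.isIdempotentElem hv.2
  have hQBP := hQ.posSemidef.add_mul_mul_eq_right hP.posSemidef hB
  calc ((2 : 𝕜) • (Q * B * P)) *ᵥ v = (Q * B * P + P * B * Q) *ᵥ v := by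
        rw [two_smul, ← hQ.posSemidef.mul_mul_comm_of_add hP.posSemidef hB]
    _ = (Q * B * P + P * B * P) *ᵥ v := by
        simp only [add_mulVec, ← mulVec_mulVec, hPv, hQv]
    _ = v := by rw [← Matrix.add_mul, ← Matrix.add_mul, hQBP, hPv]

end Matrix

/-- Anderson–Duffin: for orthogonal projections P, Q on ℂⁿ, the operator
2 Q (Q+P)⁺ P is the orthogonal projection onto range(P) ∩ range(Q). -/
theorem stmt14 {n : ℕ} (P Q : Matrix (Fin n) (Fin n) ℂ)
    (hP : Pᴴ = P) (hP2 : P * P = P) (hQ : Qᴴ = Q) (hQ2 : Q * Q = Q)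
    (hPQ : (Q + P).IsHermitian)
    (R : Matrix (Fin n) (Fin n) ℂ)
    (hR : R = (2 : ℂ) • (Q * herPinv hPQ * P)) :
    Rᴴ = R ∧ R * R = R ∧
    (∀ v : Fin n → ℂ,
      R.mulVec v ∈ (LinearMap.range P.mulVecLin ⊓ LinearMap.range Q.mulVecLin)) ∧
    (∀ v ∈ (LinearMap.range P.mulVecLin ⊓ LinearMap.range Q.mulVecLin),
      R.mulVec v = v) := by
  have hPproj : IsStarProjection P := ⟨hP2, hP⟩
  have hQproj : IsStarProjection Q := ⟨hQ2, hQ⟩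
  have hB := mul_herPinv_mul_self hPQ
  have hmem := hQproj.smul_mul_mul_mulVec_mem_range_inf hPproj hB
  have hfix {v} := hQproj.smul_mul_mul_mulVec_eq_self hPproj hB (v := v)
  subst hR
  refine ⟨?_, ext_of_mulVec_single fun i => ?_, hmem, fun _ => hfix⟩
  · rw [conjTranspose_smul, star_ofNat, hQproj.posSemidef.conjTranspose_mul_mul_of_add
      hPproj.posSemidef hB (conjTranspose_herPinv hPQ)]
  · rw [← mulVec_mulVec, hfix (hmem _)]
end
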